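/- For every x ∈ (−L−β, L+β)^k, every eigenvalue λ of the symmetric matrix B(x) satisfies λ ≥ σ, where B(x) = γ^(−2)·diag(0, I_{k−1}) + w(x)·w(x)ᵀ and w(x) ∈ ℝ^k is the column vector with entries w(x)ⱼ = γ^(k−j)·(∂Φ₀/∂xⱼ)(x) for j = 1, …, k. (Proposition 'eig-B'.) -/

import Mathlib

/-!
Write `g = γ⁻² = C₁σ`, so `B = g·diag(0, 1, …, 1) + w wᵀ` with `w₁² ≥ C₂σ` and
`∑_{j ≥ 2} wⱼ² ≤ (g - σ)(C₂ - 1)`. An eigenvector `v` of `λ` has `λ |v|² = vᵀBv`, so it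
suffices to bound the quadratic form `vᵀBv = g |v'|² + (w₁v₁ + w'·v')²`, where `'` drops the
first coordinate. The inequality `(x + y)² ≥ x²/c - y²/(c - 1)` with `c = C₂`, followed by
Cauchy–Schwarz on `w'·v'`, gives `vᵀBv ≥ σ v₁² + (g - (g - σ)) |v'|² = σ |v|²`.
-/

open Finset Matrix

section

variable {K : Type*} [Field K] [LinearOrder K] [IsStrictOrderedRing K]

theorem div_sub_div_le_sq_add {c : K} (hc : 1 < c) (x y : K) :
    x ^ 2 / c - y ^ 2 / (c - 1) ≤ (x + y) ^ 2 := by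
  have hc0 : 0 < c := by linarith
  have hc1 : 0 < c - 1 := by linarith
  have key : (x + y) ^ 2 - (x ^ 2 / c - y ^ 2 / (c - 1)) =
      ((c - 1) * x + c * y) ^ 2 / (c * (c - 1)) := by
    field_simp
    ring
  have : 0 ≤ ((c - 1) * x + c * y) ^ 2 / (c * (c - 1)) := by positivity
  linarith

theorem le_sq_pow_mul_of_pow_mul_le {γ g c d : K} (hγ : γ ^ 2 * g = 1) {n : ℕ}
    (h : g ^ n * c ≤ d ^ 2) : c ≤ (γ ^ n * d) ^ 2 :=
  calc c = (γ ^ 2 * g) ^ n * c := by rw [hγ, one_pow, one_mul]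
    _ = (γ ^ 2) ^ n * (g ^ n * c) := by ring
    _ ≤ (γ ^ 2) ^ n * d ^ 2 := mul_le_mul_of_nonneg_left h (by positivity)
    _ = (γ ^ n * d) ^ 2 := by ring

theorem sq_pow_mul_le_of_sq_le {γ d b : K} (hγ : γ ^ 2 ≤ 1) (n : ℕ) (h : d ^ 2 ≤ b) :
    (γ ^ n * d) ^ 2 ≤ b :=
  calc (γ ^ n * d) ^ 2 = (γ ^ 2) ^ n * d ^ 2 := by ring
    _ ≤ 1 * d ^ 2 := mul_le_mul_of_nonneg_right (pow_le_one₀ (sq_nonneg γ) hγ) (sq_nonneg d)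
    _ = d ^ 2 := one_mul _
    _ ≤ b := h

theorem Finset.sum_erase_le_of_forall_le_div {ι : Type*} [Fintype ι] [DecidableEq ι] (i₀ : ι)
    {f : ι → K} {b : K} (hι : 1 < Fintype.card ι)
    (h : ∀ j ≠ i₀, f j ≤ b / (Fintype.card ι - 1)) : ∑ j ∈ univ.erase i₀, f j ≤ b := by
  have hcard : ((Fintype.card ι : K) - 1) ≠ 0 := by
    rw [sub_ne_zero]
    exact_mod_cast hι.ne'
  calc ∑ j ∈ univ.erase i₀, f j ≤ #(univ.erase i₀) • (b / (Fintype.card ι - 1)) :=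
        sum_le_card_nsmul _ _ _ fun j hj => h j (ne_of_mem_erase hj)
    _ = b := by
      rw [card_erase_of_mem (mem_univ _), card_univ, nsmul_eq_mul, Nat.cast_sub hι.le,
        Nat.cast_one]
      field_simp

end

theorem Real.rpow_neg_one_div_two_sq {g : ℝ} (hg : 0 ≤ g) : (g ^ (-(1 : ℝ) / 2)) ^ 2 = g⁻¹ := by
  rw [← Real.rpow_natCast, ← Real.rpow_mul hg]
  norm_num [Real.rpow_neg_one]

namespace Matrix

variable {K n : Type*} [Field K] [Fintype n] [DecidableEq n]

theorem exists_mulVec_eq_smul_of_mem_spectrum {A : Matrix n n K} {μ : K}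
    (hμ : μ ∈ spectrum K A) : ∃ v ≠ 0, A *ᵥ v = μ • v := by
  rw [← spectrum_toLin', ← Module.End.hasEigenvalue_iff_mem_spectrum] at hμ
  obtain ⟨v, hv⟩ := hμ.exists_hasEigenvector
  exact ⟨v, hv.2, hv.apply_eq_smul⟩

theorem le_of_mem_spectrum_of_forall_le_dotProduct_mulVec [LinearOrder K]
    [IsStrictOrderedRing K] {A : Matrix n n K} {c μ : K}
    (hA : ∀ v, c * (v ⬝ᵥ v) ≤ v ⬝ᵥ (A *ᵥ v)) (hμ : μ ∈ spectrum K A) : c ≤ μ := by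
  obtain ⟨v, hv0, hv⟩ := exists_mulVec_eq_smul_of_mem_spectrum hμ
  have hpos : 0 < v ⬝ᵥ v :=
    (Fintype.sum_nonneg fun i => mul_self_nonneg (v i)).lt_of_ne'
      (dotProduct_self_eq_zero.not.2 hv0)
  refine le_of_mul_le_mul_right ?_ hpos
  simpa [hv, dotProduct_smul] using hA v

theorem dotProduct_smul_diagonal_add_vecMulVec_mulVec {R : Type*} [CommRing R] (g : R)
    (d w v : n → R) :
    v ⬝ᵥ ((g • diagonal d + vecMulVec w w) *ᵥ v) = g * ∑ i, d i * v i ^ 2 + (w ⬝ᵥ v) ^ 2 := by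
  rw [add_mulVec, smul_mulVec, vecMulVec_mulVec, dotProduct_add, dotProduct_smul,
    op_smul_eq_smul, dotProduct_smul, smul_eq_mul, smul_eq_mul, dotProduct_comm v w, ← sq]
  simp only [dotProduct, mulVec_diagonal]
  exact congrArg₂ _ (congrArg _ (sum_congr rfl fun i _ => by ring)) rfl

theorem le_dotProduct_smul_diagonal_add_vecMulVec_mulVec [LinearOrder K] [IsStrictOrderedRing K]
    (i₀ : n) {g σ c : K} {w : n → K} (hc : 1 < c) (ha : σ * c ≤ w i₀ ^ 2)
    (hS : ∑ j ∈ univ.erase i₀, w j ^ 2 ≤ (g - σ) * (c - 1)) (v : n → K) :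
    σ * (v ⬝ᵥ v) ≤
      v ⬝ᵥ ((g • diagonal (fun i => if i = i₀ then 0 else 1) + vecMulVec w w) *ᵥ v) := by
  rw [dotProduct_smul_diagonal_add_vecMulVec_mulVec]
  set x := w i₀ * v i₀
  set y := ∑ j ∈ univ.erase i₀, w j * v j
  set T := ∑ j ∈ univ.erase i₀, v j ^ 2
  have hvv : v ⬝ᵥ v = v i₀ ^ 2 + T := by
    rw [dotProduct, ← add_sum_erase _ _ (mem_univ i₀)]
    simp only [sq, T]
  have hdiag : ∑ i, (if i = i₀ then 0 else 1) * v i ^ 2 = T := by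
    rw [← add_sum_erase _ _ (mem_univ i₀), if_pos rfl, zero_mul, zero_add]
    exact sum_congr rfl fun j hj => by rw [if_neg (ne_of_mem_erase hj), one_mul]
  have hwv : w ⬝ᵥ v = x + y := by
    rw [dotProduct, ← add_sum_erase _ _ (mem_univ i₀)]
  have hc0 : 0 < c := by linarith
  have hc1 : 0 < c - 1 := by linarith
  have hT : 0 ≤ T := sum_nonneg fun j _ => sq_nonneg (v j)
  have hx : σ * v i₀ ^ 2 ≤ x ^ 2 / c := by
    rw [le_div_iff₀ hc0, mul_pow]
    nlinarith [sq_nonneg (v i₀)]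
  have hy : y ^ 2 / (c - 1) ≤ (g - σ) * T := by
    rw [div_le_iff₀ hc1]
    calc y ^ 2 ≤ (∑ j ∈ univ.erase i₀, w j ^ 2) * T := sum_mul_sq_le_sq_mul_sq _ _ _
      _ ≤ (g - σ) * (c - 1) * T := mul_le_mul_of_nonneg_right hS hT
      _ = (g - σ) * T * (c - 1) := by ring
  rw [hvv, hdiag, hwv]
  linarith [div_sub_div_le_sq_add hc x y]

end Matrix

/-- **Proposition `eig-B`.** For every `x` in the open cube, every (real) eigenvalue `λ`
of the symmetric matrix `B(x) = γ⁻²·diag(0, I_{k−1}) + w(x)·w(x)ᵀ`, where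
`w(x)ⱼ = γ^(k−j)·∂Φ₀/∂xⱼ(x)`, satisfies `λ ≥ σ`. -/
theorem eig_B (k : ℕ) (hk : 2 ≤ k)
    (σ C₁ C₂ : ℝ)
    (hσ : 1 < σ) (hC₁ : 1 < C₁) (hC₂ : 1 < C₂)
    (γ : ℝ) (hγ : γ = (C₁ * σ) ^ (-(1 : ℝ) / 2))
    (Φ₀ : EuclideanSpace ℝ (Fin k) → ℝ)
    (cube : Set (EuclideanSpace ℝ (Fin k)))
    (hd1 : ∀ x ∈ cube,
      C₁ ^ (k - 1) * C₂ * σ ^ k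
        ≤ (fderiv ℝ Φ₀ x (EuclideanSpace.single (⟨0, by omega⟩ : Fin k) 1)) ^ 2)
    (hdj : ∀ x ∈ cube, ∀ j : Fin k, 1 ≤ (j : ℕ) →
      (fderiv ℝ Φ₀ x (EuclideanSpace.single j 1)) ^ 2 ≤ (C₁ - 1) * (C₂ - 1) * σ / (k - 1))
    (w : EuclideanSpace ℝ (Fin k) → Fin k → ℝ)
    (hw : ∀ x (j : Fin k),
      w x j = γ ^ (k - 1 - (j : ℕ)) * fderiv ℝ Φ₀ x (EuclideanSpace.single j 1))
    (B : EuclideanSpace ℝ (Fin k) → Matrix (Fin k) (Fin k) ℝ)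
    (hB : ∀ x, B x = γ ^ (-2 : ℤ) •
        Matrix.diagonal (fun i : Fin k => if (i : ℕ) = 0 then (0 : ℝ) else 1)
      + Matrix.vecMulVec (w x) (w x)) :
    ∀ x ∈ cube, ∀ lam ∈ spectrum ℝ (B x), σ ≤ lam := by
  intro x hx lam hlam
  set i₀ : Fin k := ⟨0, by omega⟩
  have hg : 0 < C₁ * σ := by positivity
  have hγ2 : γ ^ 2 = (C₁ * σ)⁻¹ := hγ ▸ Real.rpow_neg_one_div_two_sq hg.le
  have hBx : B x = (C₁ * σ) • diagonal (fun i => if i = i₀ then 0 else 1)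
      + vecMulVec (w x) (w x) := by
    rw [hB, _root_.zpow_neg, zpow_ofNat, hγ2, inv_inv]
    simp only [i₀, Fin.ext_iff]
  have ha : σ * C₂ ≤ w x i₀ ^ 2 := by
    rw [hw]
    refine le_sq_pow_mul_of_pow_mul_le (hγ2 ▸ inv_mul_cancel₀ hg.ne') ?_
    calc (C₁ * σ) ^ (k - 1) * (σ * C₂) = C₁ ^ (k - 1) * C₂ * σ ^ k := by
          rw [← pow_sub_one_mul (by omega : k ≠ 0) σ]; ring
      _ ≤ _ := hd1 x hx
  have hS : ∑ j ∈ univ.erase i₀, w x j ^ 2 ≤ (C₁ * σ - σ) * (C₂ - 1) := by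
    have hγ1 : γ ^ 2 ≤ 1 := hγ2 ▸ inv_le_one_of_one_le₀ (by nlinarith)
    refine (sum_erase_le_of_forall_le_div i₀ (b := (C₁ - 1) * (C₂ - 1) * σ)
      (by rw [Fintype.card_fin]; omega) fun j hj => ?_).trans_eq (by ring)
    rw [hw, Fintype.card_fin]
    exact sq_pow_mul_le_of_sq_le hγ1 _
      (hdj x hx j (Nat.one_le_iff_ne_zero.2 (by simpa [i₀, Fin.ext_iff] using hj)))
  rw [hBx] at hlam
  exact le_of_mem_spectrum_of_forall_le_dotProduct_mulVec
    (le_dotProduct_smul_diagonal_add_vecMulVec_mulVec i₀ hC₂ ha hS) hlam
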